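/- arXiv:1308.4429 — 6 statements merged into one kernel-verified Lean document; each statement's English description precedes it below -/
import Mathlib

section
/- Let f = Σₙ aₙ eₙ* ∈ ℓ¹ = c₀* with |a₁| = supₙ |aₙ| > 0 and let X = ker f. Then for every y = (y₁, y₂, ...) ∈ X, the series Σ_{n≥1} y_{n+1} (e_{n+1} - (a_{n+1}/a₁) e₁) converges in c₀ to y. In particular the vectors xₙ = e_{n+1} - (a_{n+1}/a₁) e₁ have closed linear span equal to X. -/
open ZeroAtInftyContinuousMap Filter
open scoped ZeroAtInfty

/-- The `k`-th standard unit vector `e_k` in `c₀` (indices starting at `0`). -/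
noncomputable def e (k : ℕ) : C₀(ℕ, ℝ) where
  toFun := Pi.single k 1
  zero_at_infty' := by
    refine Filter.Tendsto.congr' ?_ tendsto_const_nhds
    have h : {k}ᶜ ∈ Filter.cocompact ℕ := by
      rw [Filter.cocompact_eq_cofinite]
      simp [Filter.mem_cofinite]
    filter_upwards [h] with n hn
    simp only [Set.mem_compl_iff, Set.mem_singleton_iff] at hn
    simp [Pi.single_apply, hn]

/-- The `k`-th coordinate functional `e_k^*` on `c₀`. -/
noncomputable def coord (k : ℕ) : C₀(ℕ, ℝ) →L[ℝ] ℝ :=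
  LinearMap.mkContinuous
    { toFun := fun y => y k
      map_add' := by intros; rfl
      map_smul' := by intros; rfl }
    1
    (fun y => by simpa using y.toBCF.norm_coe_le_norm k)

/-- The functional `f = ∑ₙ aₙ eₙ^* ∈ ℓ¹ = c₀^*` determined by a (summable) coefficient
sequence `a`. -/
noncomputable def funcOf (a : ℕ → ℝ) : C₀(ℕ, ℝ) →L[ℝ] ℝ := ∑' n : ℕ, a n • coord n

/-- The vectors `xₙ = e_{n+1} - (a_{n+1}/a₀) • e₀` (here `a₀` plays the role of the
coefficient of maximal absolute value, i.e. the paper's `a₁`). -/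
noncomputable def xvec (a : ℕ → ℝ) (n : ℕ) : C₀(ℕ, ℝ) :=
  e (n + 1) - (a (n + 1) / a 0) • e 0

/-!
The `N`-th partial sum of `∑ y_{n+1} xₙ` is the truncation `∑_{1 ≤ n ≤ N} yₙ eₙ` minus
`(∑_{1 ≤ n ≤ N} aₙ yₙ / a₀) e₀`. Truncations converge to `y - y₀ e₀` in the sup norm because
`yₙ → 0`, and the coefficient tends to `-y₀` because `∑ aₙ yₙ = f y = 0`. Each `xₙ` lies in the
closed subspace `ker f`, so the closed span of the `xₙ` is `ker f`.
-/

open Finset Topology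

lemma coord_apply (k : ℕ) (y : C₀(ℕ, ℝ)) : coord k y = y k := rfl

lemma e_apply (k n : ℕ) : e k n = if n = k then 1 else 0 :=
  Pi.single_apply k 1 n

lemma finset_sum_apply {ι : Type*} (s : Finset ι) (f : ι → C₀(ℕ, ℝ)) (k : ℕ) :
    (∑ i ∈ s, f i) k = ∑ i ∈ s, f i k :=
  map_sum (coord k) f s

lemma abs_apply_le_norm (y : C₀(ℕ, ℝ)) (k : ℕ) : |y k| ≤ ‖y‖ := by
  simpa using y.toBCF.norm_coe_le_norm k

lemma norm_le_of_forall_abs_apply_le (y : C₀(ℕ, ℝ)) {C : ℝ} (hC : 0 ≤ C)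
    (h : ∀ k, |y k| ≤ C) : ‖y‖ ≤ C := by
  rw [← norm_toBCF_eq_norm]
  exact (BoundedContinuousFunction.norm_le hC).mpr h

lemma norm_coord_le (k : ℕ) : ‖coord k‖ ≤ 1 :=
  LinearMap.mkContinuous_norm_le _ zero_le_one _

lemma sub_sum_range_smul_e_apply (y : C₀(ℕ, ℝ)) (N k : ℕ) :
    (y - ∑ n ∈ range N, y n • e n) k = if k < N then 0 else y k := by
  simp only [ZeroAtInftyContinuousMap.coe_sub, Pi.sub_apply, finset_sum_apply,
    ZeroAtInftyContinuousMap.coe_smul, Pi.smul_apply, e_apply,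
    smul_eq_mul, mul_ite, mul_one, mul_zero, sum_ite_eq, mem_range]
  split_ifs <;> simp

lemma tendsto_sum_range_smul_e (y : C₀(ℕ, ℝ)) :
    Tendsto (fun N => ∑ n ∈ range N, y n • e n) atTop (𝓝 y) := by
  have hy : Tendsto (fun k => y k) atTop (𝓝 0) := by
    simpa only [cocompact_eq_cofinite, Nat.cofinite_eq_atTop] using zero_at_infty y
  rw [Metric.tendsto_atTop]
  intro ε hε
  obtain ⟨K, hK⟩ := Metric.tendsto_atTop.mp hy (ε / 2) (half_pos hε)
  refine ⟨K, fun N hN => ?_⟩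
  have htail : ‖y - ∑ n ∈ range N, y n • e n‖ ≤ ε / 2 := by
    refine norm_le_of_forall_abs_apply_le _ (half_pos hε).le fun k => ?_
    rw [sub_sum_range_smul_e_apply]
    split_ifs with hk
    · simpa using (half_pos hε).le
    · simpa [Real.dist_eq] using (hK k (hN.trans (not_lt.mp hk))).le
  rw [dist_comm, dist_eq_norm]
  linarith

lemma tendsto_sum_range_succ_of_tendsto {E : Type*} [AddCommGroup E] [TopologicalSpace E]
    [ContinuousSub E] {f : ℕ → E} {s : E}
    (h : Tendsto (fun N => ∑ n ∈ range N, f n) atTop (𝓝 s)) :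
    Tendsto (fun N => ∑ n ∈ range N, f (n + 1)) atTop (𝓝 (s - f 0)) :=
  ((h.comp (tendsto_add_atTop_nat 1)).sub_const (f 0)).congr fun N => by
    simp [sum_range_succ']

lemma summable_smul_coord {a : ℕ → ℝ} (ha : Summable a) :
    Summable fun n => a n • coord n := by
  refine Summable.of_norm_bounded (E := C₀(ℕ, ℝ) →L[ℝ] ℝ) (g := fun n => |a n|) ha.abs
    fun n => ContinuousLinearMap.opNorm_le_bound _ (abs_nonneg _) fun y => ?_
  calc ‖a n * y n‖ = |a n| * |y n| := by rw [Real.norm_eq_abs, abs_mul]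
    _ ≤ |a n| * ‖y‖ := by gcongr; exact abs_apply_le_norm y n

lemma hasSum_funcOf_apply {a : ℕ → ℝ} (ha : Summable a) (y : C₀(ℕ, ℝ)) :
    HasSum (fun n => a n * y n) (funcOf a y) := by
  simpa [funcOf, coord_apply] using
    (summable_smul_coord ha).hasSum.mapL (ContinuousLinearMap.apply ℝ ℝ y)

lemma funcOf_e {a : ℕ → ℝ} (ha : Summable a) (k : ℕ) : funcOf a (e k) = a k := by
  refine (hasSum_funcOf_apply ha (e k)).unique ?_
  simpa [e_apply] using hasSum_single (f := fun n => a n * e k n) k fun n hn => by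
    simp [e_apply, hn]

lemma funcOf_xvec {a : ℕ → ℝ} (ha : Summable a) (ha0 : a 0 ≠ 0) (n : ℕ) :
    funcOf a (xvec a n) = 0 := by
  rw [xvec, map_sub, map_smul, funcOf_e ha, funcOf_e ha, smul_eq_mul,
    div_mul_cancel₀ _ ha0, sub_self]

lemma sum_range_smul_xvec (a : ℕ → ℝ) (y : C₀(ℕ, ℝ)) (N : ℕ) :
    ∑ n ∈ range N, y (n + 1) • xvec a n =
      ∑ n ∈ range N, y (n + 1) • e (n + 1) -
        ((∑ n ∈ range N, a (n + 1) * y (n + 1)) / a 0) • e 0 := by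
  calc ∑ n ∈ range N, y (n + 1) • xvec a n
      = ∑ n ∈ range N, (y (n + 1) • e (n + 1) - (a (n + 1) * y (n + 1) / a 0) • e 0) :=
        sum_congr rfl fun n _ => by rw [xvec]; module
    _ = _ := by rw [sum_sub_distrib, sum_div]; exact congrArg _ sum_smul.symm

theorem tendsto_sum_range_smul_xvec {a : ℕ → ℝ} (ha : Summable a) (ha0 : a 0 ≠ 0)
    {y : C₀(ℕ, ℝ)} (hy : funcOf a y = 0) :
    Tendsto (fun N => ∑ n ∈ range N, y (n + 1) • xvec a n) atTop (𝓝 y) := by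
  have hcoef : Tendsto (fun N => ∑ n ∈ range N, a (n + 1) * y (n + 1)) atTop
      (𝓝 (-(a 0 * y 0))) := by
    simpa [hy] using tendsto_sum_range_succ_of_tendsto (hasSum_funcOf_apply ha y).tendsto_sum_nat
  have hlim := (tendsto_sum_range_succ_of_tendsto (tendsto_sum_range_smul_e y)).sub
    ((hcoef.div_const (a 0)).smul_const (e 0))
  rw [neg_div, mul_div_cancel_left₀ _ ha0,
    show y - y 0 • e 0 - -y 0 • e 0 = y by module] at hlim
  simpa only [sum_range_smul_xvec] using hlim

theorem stmt2_general (a : ℕ → ℝ) (ha : Summable a) (ha0 : 0 < |a 0|) :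
    (∀ y : C₀(ℕ, ℝ), funcOf a y = 0 →
      Filter.Tendsto (fun N => ∑ n ∈ Finset.range N, y (n + 1) • xvec a n)
        Filter.atTop (nhds y)) ∧
    (Submodule.span ℝ (Set.range (xvec a))).topologicalClosure
      = LinearMap.ker (funcOf a : C₀(ℕ, ℝ) →ₗ[ℝ] ℝ) := by
  have ha0' : a 0 ≠ 0 := abs_pos.mp ha0
  refine ⟨fun y hy => tendsto_sum_range_smul_xvec ha ha0' hy, le_antisymm ?_ ?_⟩
  · refine Submodule.topologicalClosure_minimal _ ?_ (funcOf a).isClosed_ker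
    rw [Submodule.span_le]
    rintro _ ⟨n, rfl⟩
    exact funcOf_xvec ha ha0' n
  · intro y hy
    have hpartial : ∀ N, ∑ n ∈ range N, y (n + 1) • xvec a n ∈
        Submodule.span ℝ (Set.range (xvec a)) := fun N =>
      sum_mem fun n _ => Submodule.smul_mem _ _ (Submodule.subset_span ⟨n, rfl⟩)
    rw [← SetLike.mem_coe, Submodule.topologicalClosure_coe]
    exact mem_closure_of_tendsto (tendsto_sum_range_smul_xvec ha ha0' hy)
      (Eventually.of_forall hpartial)

/-- With `f`, `X = ker f` and `xₙ` as above: for every `y ∈ X` the series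
`∑ₙ y_{n+1} xₙ` converges in `c₀` to `y`; in particular the closed linear span of the `xₙ`
is exactly `X = ker f`. -/
theorem stmt2 (a : ℕ → ℝ) (ha : Summable a) (ha0 : 0 < |a 0|)
    (hmax : ∀ n, |a n| ≤ |a 0|) :
    (∀ y : C₀(ℕ, ℝ), funcOf a y = 0 →
      Filter.Tendsto (fun N => ∑ n ∈ Finset.range N, y (n + 1) • xvec a n)
        Filter.atTop (nhds y)) ∧
    (Submodule.span ℝ (Set.range (xvec a))).topologicalClosure
      = LinearMap.ker (funcOf a : C₀(ℕ, ℝ) →ₗ[ℝ] ℝ) :=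
  stmt2_general a ha ha0
end

section
/- Let D be an n × ∞ matrix over ℝ whose rows are the coordinate sequences of n linearly independent functionals f¹, ..., fⁿ ∈ ℓ¹. Then there exists a set S of n column indices such that the n × n matrix formed by the columns of D indexed by S has maximal absolute determinant among all n × n matrices formed from n columns of D; in particular this maximum is attained and is nonzero. -/
lemma aux_det_ne_zero : ∀ (n : ℕ) (f : Fin n → ℕ → ℝ), LinearIndependent ℝ f →
    ∃ g : Fin n → ℕ, (Matrix.of fun i j => f i (g j)).det ≠ 0 := by
  intro n
  induction n with
  | zero => intro f _; exact ⟨fun i => 0, by simp [Matrix.det_fin_zero]⟩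
  | succ n ih =>
    intro f hind
    obtain ⟨g, hg⟩ := ih (f ∘ Fin.castSucc) (hind.comp _ (Fin.castSucc_injective n))
    by_contra hcon
    push_neg at hcon
    set A : Fin (n+1) → ℝ := fun i =>
      (Matrix.of fun p q => f (i.succAbove p) (g q)).det with hA
    have key : ∀ k : ℕ, ∑ i : Fin (n+1), ((-1 : ℝ) ^ (i + n : ℕ) * A i) * f i k = 0 := by
      intro k
      have h0 := hcon (Fin.snoc g k : Fin (n+1) → ℕ)
      rw [Matrix.det_succ_column _ (Fin.last n)] at h0
      rw [← h0]
      refine Finset.sum_congr rfl fun i _ => ?_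
      have hsub : ((Matrix.of fun i j => f i ((Fin.snoc g k : Fin (n+1) → ℕ) j)).submatrix i.succAbove
          (Fin.last n).succAbove) = Matrix.of fun p q => f (i.succAbove p) (g q) := by
        ext p q
        simp [Fin.succAbove_last, Fin.snoc_castSucc]
      rw [hsub]
      simp [Fin.val_last, Fin.snoc_last]
      ring
    have hc : ∀ i : Fin (n+1), (-1 : ℝ) ^ ((i : ℕ) + n) * A i = 0 := by
      apply Fintype.linearIndependent_iff.mp hind
      funext k
      simpa [Finset.sum_apply, smul_eq_mul] using key k
    have hlast := hc (Fin.last n)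
    have hpow : ((-1 : ℝ) ^ ((Fin.last n : ℕ) + n)) ≠ 0 := by
      simp [pow_ne_zero]
    have hAlast : A (Fin.last n) = (Matrix.of fun i j => (f ∘ Fin.castSucc) i (g j)).det := by
      simp only [hA, Fin.succAbove_last]; rfl
    exact hg (by rw [← hAlast]; exact (mul_eq_zero.mp hlast).resolve_left hpow)

/-- Given `n` linearly independent functionals `f¹, …, fⁿ ∈ ℓ¹` forming
the rows of an `n × ∞` matrix `D`, there is a choice `g` of `n` column indices maximizing
the absolute determinant of the resulting `n × n` matrix over all choices of `n` columns
of `D`; in particular the maximum is attained and nonzero. -/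
theorem stmt5 (n : ℕ) (f : Fin n → ℕ → ℝ) (hf : ∀ i, Summable fun k => |f i k|)
    (hind : LinearIndependent ℝ f) :
    ∃ g : Fin n → ℕ,
      (Matrix.of fun i j => f i (g j)).det ≠ 0 ∧
      ∀ h : Fin n → ℕ,
        |(Matrix.of fun i j => f i (h j)).det| ≤ |(Matrix.of fun i j => f i (g j)).det| := by
  classical
  obtain ⟨g0, hg0⟩ := aux_det_ne_zero n f hind
  rcases Nat.eq_zero_or_pos n with hn | hn
  · subst hn
    exact ⟨g0, hg0, fun h => by simp [Matrix.det_fin_zero]⟩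
  set c : ℕ → ℝ := fun k => ∑ i, |f i k| with hcdef
  have hcnn : ∀ k, 0 ≤ c k := fun k => Finset.sum_nonneg fun i _ => abs_nonneg _
  have habs : ∀ i k, |f i k| ≤ c k := fun i k =>
    Finset.single_le_sum (f := fun i => |f i k|) (fun i _ => abs_nonneg _) (Finset.mem_univ i)
  set S : ℝ := ∑ i, ∑' k, |f i k| with hSdef
  have hcS : ∀ k, c k ≤ S := fun k =>
    Finset.sum_le_sum fun i _ => Summable.le_tsum (hf i) k fun j _ => abs_nonneg _
  have hcS1 : ∀ k, c k ≤ S + 1 := fun k => (hcS k).trans (by linarith)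
  have hS1pos : (0 : ℝ) < S + 1 := lt_of_le_of_lt (hcnn 0) (by linarith [hcS 0])
  -- determinant bound
  have hdet : ∀ h : Fin n → ℕ,
      |(Matrix.of fun i j => f i (h j)).det| ≤ (n.factorial : ℝ) * ∏ j, c (h j) := by
    intro h
    rw [Matrix.det_apply']
    refine (Finset.abs_sum_le_sum_abs _ _).trans ?_
    have hterm : ∀ σ : Equiv.Perm (Fin n),
        |((Equiv.Perm.sign σ : ℤ) : ℝ) * ∏ j, (Matrix.of fun i j => f i (h j)) (σ j) j|
          ≤ ∏ j, c (h j) := by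
      intro σ
      rw [abs_mul]
      have hsign : |((Equiv.Perm.sign σ : ℤ) : ℝ)| = 1 := by
        rcases Int.units_eq_one_or (Equiv.Perm.sign σ) with hs | hs <;> rw [hs] <;> norm_num
      rw [hsign, one_mul, Finset.abs_prod]
      exact Finset.prod_le_prod (fun j _ => abs_nonneg _) fun j _ => habs (σ j) (h j)
    calc ∑ σ : Equiv.Perm (Fin n),
          |((Equiv.Perm.sign σ : ℤ) : ℝ) * ∏ j, (Matrix.of fun i j => f i (h j)) (σ j) j|
        ≤ ∑ _σ : Equiv.Perm (Fin n), ∏ j, c (h j) :=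
          Finset.sum_le_sum fun σ _ => hterm σ
      _ = (n.factorial : ℝ) * ∏ j, c (h j) := by
          rw [Finset.sum_const, Finset.card_univ, Fintype.card_perm, Fintype.card_fin,
            nsmul_eq_mul]
  set d0 : ℝ := |(Matrix.of fun i j => f i (g0 j)).det| with hd0def
  have hd0pos : 0 < d0 := abs_pos.mpr hg0
  set ε : ℝ := d0 / ((n.factorial : ℝ) * (S + 1) ^ (n - 1)) with hεdef
  have hfacpos : (0 : ℝ) < (n.factorial : ℝ) * (S + 1) ^ (n - 1) := by positivity
  have hεpos : 0 < ε := div_pos hd0pos hfacpos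
  have hsumc : Summable c := by
    apply summable_sum
    intro i _
    exact hf i
  obtain ⟨N, hN⟩ := Filter.eventually_atTop.mp
    (hsumc.tendsto_atTop_zero.eventually (gt_mem_nhds hεpos))
  set N' : ℕ := max N (Finset.univ.sup g0 + 1) with hN'def
  have hN'pos : 0 < N' := lt_of_lt_of_le (Nat.succ_pos _) (le_max_right _ _)
  have : Nonempty (Fin n → Fin N') := ⟨fun _ => ⟨0, hN'pos⟩⟩
  obtain ⟨b, -, hb⟩ := Finset.exists_max_image (Finset.univ : Finset (Fin n → Fin N'))
    (fun b => |(Matrix.of fun i j => f i ((b j : ℕ))).det|) Finset.univ_nonempty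
  -- g0 lifts into the candidate set
  have hg0lt : ∀ j, g0 j < N' := fun j =>
    lt_of_lt_of_le (Nat.lt_succ_of_le (Finset.le_sup (Finset.mem_univ j))) (le_max_right _ _)
  have hd0le : d0 ≤ |(Matrix.of fun i j => f i ((b j : ℕ))).det| := by
    have := hb (fun j => ⟨g0 j, hg0lt j⟩) (Finset.mem_univ _)
    simpa using this
  refine ⟨fun j => (b j : ℕ), ?_, ?_⟩
  · exact fun hz => absurd (lt_of_lt_of_le hd0pos hd0le) (by simp [hz])
  · intro h
    by_cases hcase : ∀ j, h j < N'
    · exact hb (fun j => ⟨h j, hcase j⟩) (Finset.mem_univ _)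
    · push_neg at hcase
      obtain ⟨j0, hj0⟩ := hcase
      have hsmall : c (h j0) < ε := hN (h j0) (le_trans (le_max_left _ _) hj0)
      have hprod : ∏ j, c (h j) ≤ ε * (S + 1) ^ (n - 1) := by
        rw [← Finset.mul_prod_erase Finset.univ (fun j => c (h j)) (Finset.mem_univ j0)]
        have h1 : ∏ j ∈ Finset.univ.erase j0, c (h j) ≤ (S + 1) ^ (n - 1) := by
          have := Finset.prod_le_prod (s := Finset.univ.erase j0)
            (f := fun j => c (h j)) (g := fun _ => S + 1)
            (fun j _ => hcnn _) (fun j _ => hcS1 _)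
          rwa [Finset.prod_const, Finset.card_erase_of_mem (Finset.mem_univ j0),
            Finset.card_univ, Fintype.card_fin] at this
        exact mul_le_mul hsmall.le h1
          (Finset.prod_nonneg fun j _ => hcnn _) hεpos.le
      calc |(Matrix.of fun i j => f i (h j)).det|
          ≤ (n.factorial : ℝ) * ∏ j, c (h j) := hdet h
        _ ≤ (n.factorial : ℝ) * (ε * (S + 1) ^ (n - 1)) := by
            exact mul_le_mul_of_nonneg_left hprod (Nat.cast_nonneg _)
        _ = d0 := by
            rw [hεdef]; field_simp
        _ ≤ _ := hd0le
end

section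
/- Let A be an invertible n × n real matrix whose columns c₁, ..., cₙ have maximal |det| in the following sense: for every vector v in a given set V ⊆ ℝⁿ containing all cᵢ, replacing any column of A by v does not increase |det|. Then for every v ∈ V, the solution x of Ax = -v satisfies |xᵢ| ≤ 1 for each i = 1, ..., n. -/
/-! By Cramer's rule `det A * xᵢ = det (A with column i replaced by -v) = -det (A with column i
replaced by v)`, whose absolute value is at most `|det A|` by maximality; divide by `|det A| > 0`. -/

theorem Matrix.det_mul_eq_cramer_of_mulVec_eq {R n : Type*} [CommRing R] [Fintype n]
    [DecidableEq n] {A : Matrix n n R} {x b : n → R} (hx : A.mulVec x = b) (i : n) :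
    A.det * x i = A.cramer b i := by
  rw [← hx, Matrix.cramer_eq_adjugate_mulVec, Matrix.mulVec_mulVec, Matrix.adjugate_mul,
    Matrix.smul_mulVec, Matrix.one_mulVec, Pi.smul_apply, smul_eq_mul]

theorem stmt6_general (n : ℕ) (A : Matrix (Fin n) (Fin n) ℝ) (hA : A.det ≠ 0)
    (V : Set (Fin n → ℝ))
    (hmax : ∀ v ∈ V, ∀ i, |(A.updateCol i v).det| ≤ |A.det|)
    (v : Fin n → ℝ) (hv : v ∈ V) (x : Fin n → ℝ) (hx : A.mulVec x = -v) :
    ∀ i, |x i| ≤ 1 := by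
  intro i
  have hbound : |A.det| * |x i| ≤ |A.det| * 1 := by
    rw [← abs_mul, Matrix.det_mul_eq_cramer_of_mulVec_eq hx, map_neg, Pi.neg_apply, abs_neg,
      Matrix.cramer_apply, mul_one]
    exact hmax v hv i
  exact le_of_mul_le_mul_left hbound (abs_pos.mpr hA)

/-- Let `A` be an invertible `n × n` real matrix whose columns lie in a
set `V`, such that replacing any column of `A` by any `v ∈ V` does not increase the
absolute determinant. Then for every `v ∈ V`, the solution `x` of `A x = -v` satisfies
`|xᵢ| ≤ 1` for every `i`. -/
theorem stmt6 (n : ℕ) (A : Matrix (Fin n) (Fin n) ℝ) (hA : A.det ≠ 0)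
    (V : Set (Fin n → ℝ)) (hcolV : ∀ i, (fun j => A j i) ∈ V)
    (hmax : ∀ v ∈ V, ∀ i, |(A.updateCol i v).det| ≤ |A.det|)
    (v : Fin n → ℝ) (hv : v ∈ V) (x : Fin n → ℝ) (hx : A.mulVec x = -v) :
    ∀ i, |x i| ≤ 1 :=
  stmt6_general n A hA V hmax v hv x hx
end

section
/- The space c of convergent real sequences admits an Auerbach basis (xⱼ; xⱼ*)_{j≥0} with x₀ being the constant sequence 1. -/
open scoped ENNReal
set_option synthInstance.maxHeartbeats 1000000
set_option maxHeartbeats 1000000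

/-- The space of `X`-valued convergent sequences, as a subspace of `ℓ^∞(X)` (with the
sup norm). -/
noncomputable def cSubX (X : Type*) [NormedAddCommGroup X] [NormedSpace ℝ X] :
    Submodule ℝ (lp (fun _ : ℕ => X) ∞) where
  carrier := {y | ∃ L : X, Filter.Tendsto (fun n => y n) Filter.atTop (nhds L)}
  zero_mem' := ⟨0, by simp⟩
  add_mem' := by
    rintro y z ⟨L1, h1⟩ ⟨L2, h2⟩
    refine ⟨L1 + L2, ?_⟩
    have := h1.add h2
    simpa [lp.coeFn_add] using this
  smul_mem' := by
    rintro c y ⟨L, h⟩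
    refine ⟨c • L, ?_⟩
    have := h.const_smul c
    simpa [lp.coeFn_smul] using this

/-- The space `c` of convergent real sequences with the sup norm. -/
noncomputable abbrev cSub : Submodule ℝ (lp (fun _ : ℕ => ℝ) ∞) := cSubX ℝ

/-- An Auerbach basis of a normed space: a biorthogonal system of norm-one vectors and
norm-one functionals which is fundamental (the closed linear span of the vectors is the
whole space) and total (the functionals separate points). -/
structure IsAuerbachBasis {X : Type*} [NormedAddCommGroup X] [NormedSpace ℝ X]
    {ι : Type*} (x : ι → X) (f : ι → X →L[ℝ] ℝ) : Prop where
  biorth_eq : ∀ k, f k (x k) = 1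
  biorth_ne : ∀ k j, k ≠ j → f k (x j) = 0
  norm_vec : ∀ n, ‖x n‖ = 1
  norm_fun : ∀ n, ‖f n‖ = 1
  fundamental : (Submodule.span ℝ (Set.range x)).topologicalClosure = ⊤
  total : ∀ y, (∀ n, f n y = 0) → y = 0

/-!
Take `xⱼ = (-1, …, -1, 1, 1, …)` with `j` entries `-1`, `f₀ y = (y₀ + lim y) / 2` and
`fⱼ₊₁ y = (yⱼ₊₁ - yⱼ) / 2`: `fⱼ₊₁` sees exactly the jump of `xⱼ₊₁` between the indices `j` and
`j + 1`, and `f₀` separates `x₀ = 1` from the `xⱼ` with `j ≥ 1`, which start at `-1` and tend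
to `1`. Each `fₖ` is half a sum or difference of two functionals of norm at most `1`. The
system is total: `fⱼ₊₁ y = 0` for all `j` makes `y` constant, and then `f₀ y = y₀`. It is
fundamental: `xₘ - xₘ₊₁ = 2 eₘ`, so cutting `y` off after `N` terms and continuing by its
limit gives an element of the span, and these approximate `y` uniformly.
-/

open Filter Topology

namespace cSubX

variable {X : Type*} [NormedAddCommGroup X] [NormedSpace ℝ X]

lemma norm_apply_le (y : cSubX X) (n : ℕ) : ‖(y : ℕ → X) n‖ ≤ ‖y‖ :=
  lp.norm_apply_le_norm ENNReal.top_ne_zero _ n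

lemma tendsto_limUnder (y : cSubX X) :
    Tendsto (y : ℕ → X) atTop (𝓝 (limUnder atTop (y : ℕ → X))) :=
  tendsto_nhds_limUnder y.2

lemma norm_limUnder_le (y : cSubX X) : ‖limUnder atTop (y : ℕ → X)‖ ≤ ‖y‖ :=
  le_of_tendsto (tendsto_limUnder y).norm (.of_forall (norm_apply_le y))

noncomputable def limCLM : cSubX X →L[ℝ] X :=
  LinearMap.mkContinuous
    { toFun y := limUnder atTop (y : ℕ → X)
      map_add' y z := ((tendsto_limUnder y).add (tendsto_limUnder z)).limUnder_eq
      map_smul' c y := ((tendsto_limUnder y).const_smul c).limUnder_eq }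
    1 fun y => (norm_limUnder_le y).trans_eq (one_mul _).symm

lemma tendsto_limCLM (y : cSubX X) : Tendsto (y : ℕ → X) atTop (𝓝 (limCLM y)) :=
  tendsto_limUnder y

lemma limCLM_eq {y : cSubX X} {L : X} (h : Tendsto (y : ℕ → X) atTop (𝓝 L)) :
    limCLM y = L :=
  h.limUnder_eq

lemma norm_limCLM_apply_le (y : cSubX X) : ‖limCLM y‖ ≤ ‖y‖ := norm_limUnder_le y

noncomputable def evalCLM (n : ℕ) : cSubX X →L[ℝ] X :=
  (lp.evalCLM ℝ _ ∞ n).comp (cSubX X).subtypeL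

@[simp] lemma evalCLM_apply (n : ℕ) (y : cSubX X) : evalCLM n y = (y : ℕ → X) n := rfl

end cSubX

namespace cSub

open cSubX

def stepSeq (j n : ℕ) : ℝ := if n < j then -1 else 1

lemma abs_stepSeq (j n : ℕ) : |stepSeq j n| = 1 := by
  unfold stepSeq; split_ifs <;> simp

lemma tendsto_stepSeq (j : ℕ) : Tendsto (stepSeq j) atTop (𝓝 1) :=
  tendsto_const_nhds.congr' <| (eventually_ge_atTop j).mono fun n hn => by
    simp [stepSeq, hn.not_gt]

lemma stepSeq_sub_stepSeq_succ (m n : ℕ) :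
    stepSeq m n - stepSeq (m + 1) n = if n = m then 2 else 0 := by
  unfold stepSeq; split_ifs <;> first | omega | norm_num

lemma stepSeq_succ_sub_stepSeq (j k : ℕ) :
    stepSeq j (k + 1) - stepSeq j k = if k + 1 = j then 2 else 0 := by
  unfold stepSeq; split_ifs <;> first | omega | norm_num

noncomputable def step (j : ℕ) : cSub :=
  ⟨⟨stepSeq j, memℓp_infty ⟨1, by rintro _ ⟨n, rfl⟩; exact (abs_stepSeq j n).le⟩⟩,
    1, tendsto_stepSeq j⟩

@[simp] lemma step_apply (j n : ℕ) : (step j : ℕ → ℝ) n = stepSeq j n := rfl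

lemma norm_step (j : ℕ) : ‖step j‖ = 1 := by
  refine le_antisymm (lp.norm_le_of_forall_le zero_le_one fun n => (abs_stepSeq j n).le) ?_
  simpa [abs_stepSeq] using norm_apply_le (step j) 0

lemma limCLM_step (j : ℕ) : limCLM (step j) = 1 := limCLM_eq (tendsto_stepSeq j)

noncomputable def stepDual : ℕ → cSub →L[ℝ] ℝ
  | 0 => (2 : ℝ)⁻¹ • (evalCLM 0 + limCLM)
  | k + 1 => (2 : ℝ)⁻¹ • (evalCLM (k + 1) - evalCLM k)

lemma stepDual_zero_apply (y : cSub) :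
    stepDual 0 y = ((y : ℕ → ℝ) 0 + limCLM y) / 2 := by
  simp only [stepDual, smul_apply, add_apply, evalCLM_apply, smul_eq_mul]
  ring

lemma stepDual_succ_apply (k : ℕ) (y : cSub) :
    stepDual (k + 1) y = ((y : ℕ → ℝ) (k + 1) - (y : ℕ → ℝ) k) / 2 := by
  simp only [stepDual, smul_apply, sub_apply, evalCLM_apply, smul_eq_mul]
  ring

lemma stepDual_step (k j : ℕ) : stepDual k (step j) = if k = j then 1 else 0 := by
  cases k with
  | zero =>
    rw [stepDual_zero_apply, step_apply, limCLM_step]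
    cases j <;> norm_num [stepSeq]
  | succ k =>
    rw [stepDual_succ_apply, step_apply, step_apply, stepSeq_succ_sub_stepSeq]
    split_ifs <;> norm_num

lemma norm_stepDual_le (k : ℕ) : ‖stepDual k‖ ≤ 1 := by
  refine ContinuousLinearMap.opNorm_le_bound _ zero_le_one fun y => ?_
  have hy (n : ℕ) := abs_le.mp (Real.norm_eq_abs _ ▸ norm_apply_le y n)
  rw [one_mul, Real.norm_eq_abs, abs_le]
  cases k with
  | zero =>
    have hL := abs_le.mp (Real.norm_eq_abs _ ▸ norm_limCLM_apply_le y)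
    rw [stepDual_zero_apply]
    constructor <;> linarith [hy 0]
  | succ k =>
    rw [stepDual_succ_apply]
    constructor <;> linarith [hy k, hy (k + 1)]

lemma norm_stepDual (k : ℕ) : ‖stepDual k‖ = 1 := by
  refine le_antisymm (norm_stepDual_le k) ?_
  calc 1 = ‖stepDual k (step k)‖ := by simp [stepDual_step]
    _ ≤ ‖stepDual k‖ * ‖step k‖ := (stepDual k).le_opNorm _
    _ = ‖stepDual k‖ := by rw [norm_step, mul_one]

lemma eq_zero_of_forall_stepDual_eq_zero {y : cSub} (h : ∀ k, stepDual k y = 0) : y = 0 := by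
  have hconst (n : ℕ) : (y : ℕ → ℝ) n = (y : ℕ → ℝ) 0 := by
    induction n with
    | zero => rfl
    | succ n ih =>
      have := h (n + 1)
      rw [stepDual_succ_apply] at this
      linarith
  have hlim : limCLM y = (y : ℕ → ℝ) 0 :=
    limCLM_eq (tendsto_const_nhds.congr fun n => (hconst n).symm)
  have h0 : (y : ℕ → ℝ) 0 = 0 := by
    have := h 0
    rw [stepDual_zero_apply, hlim] at this
    linarith
  ext n
  simp [hconst n, h0]

noncomputable def truncate (y : cSub) (N : ℕ) : cSub :=
  limCLM y • step 0 +
    ∑ m ∈ Finset.range N, (((y : ℕ → ℝ) m - limCLM y) / 2) • (step m - step (m + 1))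

lemma truncate_apply (y : cSub) (N n : ℕ) :
    (truncate y N : ℕ → ℝ) n = if n < N then (y : ℕ → ℝ) n else limCLM y := by
  rw [← evalCLM_apply, truncate, map_add, map_sum]
  simp only [map_smul, map_sub, evalCLM_apply, step_apply, smul_eq_mul, stepSeq_sub_stepSeq_succ,
    mul_ite, mul_zero, Finset.sum_ite_eq, Finset.mem_range]
  split_ifs <;> simp [stepSeq]

lemma truncate_mem_span (y : cSub) (N : ℕ) :
    truncate y N ∈ Submodule.span ℝ (Set.range step) := by
  have hstep (j : ℕ) : step j ∈ Submodule.span ℝ (Set.range step) :=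
    Submodule.subset_span ⟨j, rfl⟩
  exact add_mem (Submodule.smul_mem _ _ (hstep 0)) <| sum_mem fun m _ =>
    Submodule.smul_mem _ _ (sub_mem (hstep m) (hstep (m + 1)))

lemma tendsto_truncate (y : cSub) : Tendsto (truncate y) atTop (𝓝 y) := by
  rw [Metric.tendsto_atTop]
  intro ε hε
  obtain ⟨N, hN⟩ := Metric.tendsto_atTop.mp (tendsto_limCLM y) (ε / 2) (half_pos hε)
  refine ⟨N, fun M hM => ?_⟩
  rw [dist_eq_norm]
  refine (lp.norm_le_of_forall_le (half_pos hε).le fun n => ?_).trans_lt (half_lt_self hε)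
  change ‖((truncate y M - y : cSub) : ℕ → ℝ) n‖ ≤ ε / 2
  rw [← evalCLM_apply, map_sub, evalCLM_apply, evalCLM_apply, truncate_apply]
  split_ifs with hn
  · simp [(half_pos hε).le]
  · rw [← dist_eq_norm, dist_comm]
    exact (hN n (by omega)).le

lemma topologicalClosure_span_range_step :
    (Submodule.span ℝ (Set.range step)).topologicalClosure = ⊤ :=
  Submodule.eq_top_iff'.mpr fun y =>
    mem_closure_of_tendsto (tendsto_truncate y) (.of_forall (truncate_mem_span y))

end cSub

/-- The space `c` of convergent real sequences admits an Auerbach basis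
`(xⱼ; xⱼ^*)_{j ≥ 0}` with `x₀` the constant sequence `1`. -/
theorem stmt12 :
    ∃ (x : ℕ → cSub) (f : ℕ → cSub →L[ℝ] ℝ),
      IsAuerbachBasis x f ∧ ∀ k : ℕ, (x 0 : lp (fun _ : ℕ => ℝ) ∞) k = 1 := by
  refine ⟨cSub.step, cSub.stepDual,
    ⟨fun k => ?_, fun k j hkj => ?_, cSub.norm_step, cSub.norm_stepDual,
      cSub.topologicalClosure_span_range_step, fun y => cSub.eq_zero_of_forall_stepDual_eq_zero⟩,
    fun k => ?_⟩
  · simp [cSub.stepDual_step]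
  · simp [cSub.stepDual_step, hkj]
  · simp [cSub.stepSeq]
end

section
/- Let X be a Banach space admitting an Auerbach basis (x_m; x_m*). Then the space c(X) of X-valued convergent sequences with sup norm admits an Auerbach basis. -/
open scoped ENNReal
set_option synthInstance.maxHeartbeats 1000000
set_option maxHeartbeats 1000000

/-!
If `(xᵢ; fᵢ)` is an Auerbach basis of `X`, an Auerbach basis of `c(X)` indexed by pairs `(i, n)`
consists of the sequences `wₙ xᵢ = (-xᵢ, …, -xᵢ, xᵢ, xᵢ, …)` with `n` leading minus signs
(`signedConst n`) and of the functionals `fᵢ ∘ Tₙ` (`Tₙ = coeff n`), where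
`T₀ y = (y₀ + lim y) / 2` and `Tₙ₊₁ y = (yₙ₊₁ - yₙ) / 2`.
Each `Tₙ` has norm at most `1` and `Tₙ (wₘ a) = δₙₘ a`, so biorthogonality and the norms come from
those of `X`. The `Tₙ` jointly separate points: if all differences of `y` vanish, `y` is constant,
and then `T₀ y = y₀`. Finally `(wⱼ a - wⱼ₊₁ a) / 2` is `a` placed at position `j`, so the span of
the `wₙ a` contains all eventually constant sequences, which are dense in `c(X)`.
-/

open Filter Topology Submodule

namespace IsAuerbachBasis

variable {E : Type*} [NormedAddCommGroup E] [NormedSpace ℝ E] {ι κ : Type*}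
  {x : ι → E} {f : ι → E →L[ℝ] ℝ}

theorem of_norm_le_one (biorth_eq : ∀ k, f k (x k) = 1)
    (biorth_ne : ∀ k j, k ≠ j → f k (x j) = 0) (norm_vec : ∀ n, ‖x n‖ = 1)
    (norm_fun_le : ∀ n, ‖f n‖ ≤ 1)
    (fundamental : (span ℝ (Set.range x)).topologicalClosure = ⊤)
    (total : ∀ y, (∀ n, f n y = 0) → y = 0) : IsAuerbachBasis x f where
  biorth_eq := biorth_eq
  biorth_ne := biorth_ne
  norm_vec := norm_vec
  norm_fun n := (norm_fun_le n).antisymm <| by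
    simpa [biorth_eq n] using (f n).unit_le_opNorm (x n) (norm_vec n).le
  fundamental := fundamental
  total := total

theorem comp_equiv (h : IsAuerbachBasis x f) (e : κ ≃ ι) : IsAuerbachBasis (x ∘ e) (f ∘ e) where
  biorth_eq k := h.biorth_eq (e k)
  biorth_ne k j hkj := h.biorth_ne (e k) (e j) (e.injective.ne hkj)
  norm_vec k := h.norm_vec (e k)
  norm_fun k := h.norm_fun (e k)
  fundamental := by rw [e.surjective.range_comp]; exact h.fundamental
  total y hy := h.total y fun i => by simpa using hy (e.symm i)

end IsAuerbachBasis

theorem topologicalClosure_span_range_apply_eq_top {E F : Type*} [NormedAddCommGroup E]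
    [NormedSpace ℝ E] [NormedAddCommGroup F] [NormedSpace ℝ F] {ι κ : Type*}
    {x : ι → E} (T : κ → E →L[ℝ] F) (hx : (span ℝ (Set.range x)).topologicalClosure = ⊤)
    (hT : (span ℝ (⋃ k, Set.range (T k))).topologicalClosure = ⊤) :
    (span ℝ (Set.range fun p : ι × κ => T p.2 (x p.1))).topologicalClosure = ⊤ := by
  set V := span ℝ (Set.range fun p : ι × κ => T p.2 (x p.1))
  have hrange : ∀ k, Set.range (T k) ⊆ V.topologicalClosure := by
    intro k
    have hmap : (span ℝ (Set.range x)).map (T k : E →ₗ[ℝ] F) ≤ V := by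
      rw [map_span, span_le]
      rintro _ ⟨_, ⟨i, rfl⟩, rfl⟩
      exact subset_span ⟨(i, k), rfl⟩
    rintro _ ⟨a, rfl⟩
    have ha : a ∈ (span ℝ (Set.range x)).topologicalClosure := hx ▸ mem_top
    exact topologicalClosure_mono hmap (topologicalClosure_map (T k) _ ⟨a, ha, rfl⟩)
  rw [eq_top_iff, ← hT]
  exact topologicalClosure_minimal _ (span_le.mpr (Set.iUnion_subset hrange))
    V.isClosed_topologicalClosure

namespace cSubX

theorem memℓp_signedConst {X : Type*} [NormedAddCommGroup X] (n : ℕ) (a : X) :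
    Memℓp (fun k : ℕ => if k < n then -a else a) ∞ :=
  memℓp_infty ⟨‖a‖, by rintro _ ⟨k, rfl⟩; dsimp only; split_ifs <;> simp⟩

theorem tendsto_signedConst {X : Type*} [TopologicalSpace X] [Neg X] (n : ℕ) (a : X) :
    Tendsto (fun k : ℕ => if k < n then -a else a) atTop (𝓝 a) :=
  tendsto_atTop_of_eventually_const (i₀ := n) fun _ hk => if_neg hk.not_gt

variable {X : Type*} [NormedAddCommGroup X] [NormedSpace ℝ X]

noncomputable def coord (k : ℕ) : cSubX X →L[ℝ] X :=
  (lp.evalCLM ℝ (fun _ : ℕ => X) ∞ k).comp (cSubX X).subtypeL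

theorem coord_apply (k : ℕ) (y : cSubX X) : coord k y = (y : lp (fun _ : ℕ => X) ∞) k := rfl

theorem norm_coord_apply_le (k : ℕ) (y : cSubX X) : ‖coord k y‖ ≤ ‖y‖ :=
  lp.norm_apply_le_norm ENNReal.top_ne_zero _ k

theorem norm_coord_le (k : ℕ) : ‖(coord k : cSubX X →L[ℝ] X)‖ ≤ 1 :=
  ContinuousLinearMap.opNorm_le_bound _ zero_le_one fun y => by
    simpa using norm_coord_apply_le k y

theorem ext_coord {y z : cSubX X} (h : ∀ k, coord k y = coord k z) : y = z :=
  Subtype.ext (lp.ext (funext h))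

theorem norm_le_of_forall_coord_le {y : cSubX X} {C : ℝ} (hC : 0 ≤ C)
    (h : ∀ k, ‖coord k y‖ ≤ C) : ‖y‖ ≤ C :=
  lp.norm_le_of_forall_le hC h

theorem exists_tendsto_coord (y : cSubX X) : ∃ L, Tendsto (fun k => coord k y) atTop (𝓝 L) :=
  y.2

noncomputable def limₗ : cSubX X →ₗ[ℝ] X where
  toFun y := limUnder atTop fun k => coord k y
  map_add' y z := by
    have hy := tendsto_nhds_limUnder (exists_tendsto_coord y)
    have hz := tendsto_nhds_limUnder (exists_tendsto_coord z)
    refine tendsto_nhds_unique (tendsto_nhds_limUnder (exists_tendsto_coord (y + z))) ?_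
    simpa using hy.add hz
  map_smul' c y := by
    have hy := tendsto_nhds_limUnder (exists_tendsto_coord y)
    refine tendsto_nhds_unique (tendsto_nhds_limUnder (exists_tendsto_coord (c • y))) ?_
    simpa using hy.const_smul c

theorem tendsto_coord_limₗ (y : cSubX X) :
    Tendsto (fun k => coord k y) atTop (𝓝 (limₗ y)) :=
  tendsto_nhds_limUnder (exists_tendsto_coord y)

theorem norm_limₗ_le (y : cSubX X) : ‖limₗ y‖ ≤ 1 * ‖y‖ := by
  simpa using le_of_tendsto' (tendsto_coord_limₗ y).norm (norm_coord_apply_le · y)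

noncomputable def limit : cSubX X →L[ℝ] X := LinearMap.mkContinuous limₗ 1 norm_limₗ_le

theorem tendsto_coord_limit (y : cSubX X) : Tendsto (fun k => coord k y) atTop (𝓝 (limit y)) :=
  tendsto_coord_limₗ y

theorem limit_eq_of_tendsto {y : cSubX X} {L : X} (h : Tendsto (fun k => coord k y) atTop (𝓝 L)) :
    limit y = L :=
  tendsto_nhds_unique (tendsto_coord_limit y) h

theorem norm_limit_le : ‖(limit : cSubX X →L[ℝ] X)‖ ≤ 1 :=
  LinearMap.mkContinuous_norm_le _ zero_le_one _

noncomputable def signedConstₗ (n : ℕ) : X →ₗ[ℝ] cSubX X where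
  toFun a := ⟨⟨_, memℓp_signedConst n a⟩, _, tendsto_signedConst n a⟩
  map_add' a b := ext_coord fun k => by
    simp only [coord_apply, Submodule.coe_add, lp.coeFn_add, Pi.add_apply]
    split_ifs <;> abel
  map_smul' c a := ext_coord fun k => by
    simp only [coord_apply, Submodule.coe_smul, lp.coeFn_smul, Pi.smul_apply]
    split_ifs <;> simp

theorem coord_signedConstₗ (n k : ℕ) (a : X) :
    coord k (signedConstₗ n a) = if k < n then -a else a := rfl

theorem norm_signedConstₗ (n : ℕ) (a : X) : ‖signedConstₗ n a‖ = ‖a‖ := by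
  refine le_antisymm (norm_le_of_forall_coord_le (norm_nonneg a) fun k => ?_) ?_
  · rw [coord_signedConstₗ]; split_ifs <;> simp
  · simpa [coord_signedConstₗ] using norm_coord_apply_le n (signedConstₗ n a)

noncomputable def signedConst (n : ℕ) : X →L[ℝ] cSubX X :=
  LinearMap.mkContinuous (signedConstₗ n) 1 fun a => by rw [norm_signedConstₗ, one_mul]

@[simp] theorem coord_signedConst (n k : ℕ) (a : X) :
    coord k (signedConst n a) = if k < n then -a else a := rfl

@[simp] theorem limit_signedConst (n : ℕ) (a : X) : limit (signedConst n a) = a :=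
  limit_eq_of_tendsto (tendsto_signedConst n a)

theorem norm_signedConst (n : ℕ) (a : X) : ‖signedConst n a‖ = ‖a‖ :=
  norm_signedConstₗ n a

noncomputable def coeff : ℕ → cSubX X →L[ℝ] X
  | 0 => (2⁻¹ : ℝ) • (coord 0 + limit)
  | n + 1 => (2⁻¹ : ℝ) • (coord (n + 1) - coord n)

theorem coeff_zero_apply (y : cSubX X) : coeff 0 y = (2⁻¹ : ℝ) • (coord 0 y + limit y) := rfl

theorem coeff_succ_apply (n : ℕ) (y : cSubX X) :
    coeff (n + 1) y = (2⁻¹ : ℝ) • (coord (n + 1) y - coord n y) := rfl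

theorem norm_coeff_apply_le (n : ℕ) (y : cSubX X) : ‖coeff n y‖ ≤ ‖y‖ := by
  have hcoord (k : ℕ) : ‖coord k y‖ ≤ ‖y‖ := norm_coord_apply_le k y
  have hlimit : ‖limit y‖ ≤ ‖y‖ := by
    simpa using ContinuousLinearMap.le_of_opNorm_le _ norm_limit_le y
  have hhalf : ‖(2⁻¹ : ℝ)‖ = 2⁻¹ := by norm_num
  cases n with
  | zero =>
    rw [coeff_zero_apply, norm_smul, hhalf]
    linarith [norm_add_le (coord 0 y) (limit y), hcoord 0]
  | succ n =>
    rw [coeff_succ_apply, norm_smul, hhalf]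
    linarith [norm_sub_le (coord (n + 1) y) (coord n y), hcoord n, hcoord (n + 1)]

theorem norm_coeff_le (n : ℕ) : ‖(coeff n : cSubX X →L[ℝ] X)‖ ≤ 1 :=
  ContinuousLinearMap.opNorm_le_bound _ zero_le_one fun y => by
    simpa using norm_coeff_apply_le n y

theorem coeff_signedConst (n m : ℕ) (a : X) :
    coeff n (signedConst m a) = if n = m then a else 0 := by
  cases n with
  | zero =>
    rw [coeff_zero_apply, coord_signedConst, limit_signedConst]
    rcases m.eq_zero_or_pos with rfl | hm
    · simp only [lt_irrefl, if_true, if_false]; module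
    · simp [hm, hm.ne]
  | succ n =>
    rw [coeff_succ_apply, coord_signedConst, coord_signedConst]
    rcases lt_trichotomy (n + 1) m with h | rfl | h
    · simp [h, (Nat.lt_succ_self n).trans h, h.ne]
    · simp only [lt_irrefl, Nat.lt_succ_self, if_true, if_false]; module
    · simp [h.not_gt, Nat.not_lt.mpr (Nat.lt_succ_iff.mp h), h.ne']

theorem eq_zero_of_forall_coeff_eq_zero {y : cSubX X} (hy : ∀ n, coeff n y = 0) : y = 0 := by
  have hstep (n : ℕ) : coord (n + 1) y = coord n y := by
    simpa [coeff_succ_apply, sub_eq_zero] using hy (n + 1)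
  have hconst (k : ℕ) : coord k y = coord 0 y := by
    induction k with
    | zero => rfl
    | succ k ih => rw [hstep, ih]
  have hlimit : limit y = coord 0 y :=
    limit_eq_of_tendsto (tendsto_const_nhds.congr fun k => (hconst k).symm)
  have h0 : coord 0 y = 0 := by
    simpa [coeff_zero_apply, hlimit, ← two_smul ℝ] using hy 0
  exact ext_coord fun k => by rw [hconst, h0, map_zero]

theorem coord_signedConst_sub_succ (j k : ℕ) (a : X) :
    coord k ((2⁻¹ : ℝ) • (signedConst j a - signedConst (j + 1) a)) = if k = j then a else 0 := by
  simp only [map_smul, map_sub, coord_signedConst]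
  rcases lt_trichotomy k j with h | rfl | h
  · simp [h, h.trans (Nat.lt_succ_self j), h.ne]
  · simp only [lt_irrefl, Nat.lt_succ_self, if_true, if_false]; module
  · simp [h.not_gt, Nat.not_lt.mpr h, h.ne']

theorem topologicalClosure_span_signedConst :
    (span ℝ (⋃ n, Set.range (signedConst n : X →L[ℝ] cSubX X))).topologicalClosure = ⊤ := by
  set S := span ℝ (⋃ n, Set.range (signedConst n : X →L[ℝ] cSubX X))
  have hmem (n : ℕ) (a : X) : signedConst n a ∈ S :=
    subset_span (Set.mem_iUnion.mpr ⟨n, a, rfl⟩)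
  refine eq_top_iff.mpr fun y _ => ?_
  rw [← SetLike.mem_coe, topologicalClosure_coe, Metric.mem_closure_iff]
  intro ε hε
  obtain ⟨N, hN⟩ := Metric.tendsto_atTop.mp (tendsto_coord_limit y) (ε / 2) (half_pos hε)
  set L := limit y
  let pulse (j : ℕ) (a : X) : cSubX X := (2⁻¹ : ℝ) • (signedConst j a - signedConst (j + 1) a)
  let z : cSubX X := signedConst 0 L + ∑ j ∈ Finset.range N, pulse j (coord j y - L)
  have hz : z ∈ S := S.add_mem (hmem 0 L) <| S.sum_mem fun j _ =>
    S.smul_mem _ (S.sub_mem (hmem j _) (hmem (j + 1) _))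
  have hcoord (k : ℕ) : coord k z = if k < N then coord k y else L := by
    simp only [z, pulse, map_add, map_sum, coord_signedConst_sub_succ, Finset.sum_ite_eq,
      Finset.mem_range, coord_signedConst, Nat.not_lt_zero, if_false]
    split_ifs <;> abel
  refine ⟨z, hz, ?_⟩
  rw [dist_eq_norm]
  refine (norm_le_of_forall_coord_le (half_pos hε).le fun k => ?_).trans_lt (half_lt_self hε)
  rw [map_sub, hcoord]
  split_ifs with hk
  · simpa using (half_pos hε).le
  · simpa [dist_eq_norm] using (hN k (not_lt.mp hk)).le

theorem isAuerbachBasis_signedConst {ι : Type*} {x : ι → X} {f : ι → X →L[ℝ] ℝ}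
    (hX : IsAuerbachBasis x f) :
    IsAuerbachBasis (fun p : ι × ℕ => signedConst p.2 (x p.1))
      (fun p => (f p.1).comp (coeff p.2)) := by
  refine .of_norm_le_one (fun p => ?_) (fun p q hpq => ?_) (fun p => ?_) (fun p => ?_)
    (topologicalClosure_span_range_apply_eq_top _ hX.fundamental
      topologicalClosure_span_signedConst)
    (fun y hy => eq_zero_of_forall_coeff_eq_zero fun n => hX.total _ fun i => hy (i, n))
  · simp [coeff_signedConst, hX.biorth_eq]
  · obtain ⟨i, n⟩ := p
    obtain ⟨j, m⟩ := q
    by_cases hnm : n = m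
    · subst hnm
      simpa [coeff_signedConst] using hX.biorth_ne i j fun hij => hpq (by rw [hij])
    · simp [coeff_signedConst, hnm]
  · rw [norm_signedConst, hX.norm_vec]
  · calc ‖(f p.1).comp (coeff p.2)‖ ≤ ‖f p.1‖ * ‖coeff p.2‖ := (f p.1).opNorm_comp_le _
      _ ≤ 1 := by rw [hX.norm_fun, one_mul]; exact norm_coeff_le _

end cSubX

theorem stmt15_general (X : Type) [NormedAddCommGroup X] [NormedSpace ℝ X]
    (x : ℕ → X) (f : ℕ → X →L[ℝ] ℝ) (hX : IsAuerbachBasis x f) :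
    ∃ (v : ℕ → cSubX X) (g : ℕ → (cSubX X : Submodule ℝ (lp (fun _ : ℕ => X) ∞)) →L[ℝ] ℝ),
      IsAuerbachBasis v g :=
  ⟨_, _, (cSubX.isAuerbachBasis_signedConst hX).comp_equiv Nat.pairEquiv.symm⟩

/-- If the Banach space `X` admits an Auerbach basis, then so does the
space `c(X)` of `X`-valued convergent sequences with the sup norm. -/
theorem stmt15 (X : Type) [NormedAddCommGroup X] [NormedSpace ℝ X] [CompleteSpace X]
    (x : ℕ → X) (f : ℕ → X →L[ℝ] ℝ) (hX : IsAuerbachBasis x f) :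
    ∃ (v : ℕ → cSubX X) (g : ℕ → (cSubX X : Submodule ℝ (lp (fun _ : ℕ => X) ∞)) →L[ℝ] ℝ),
      IsAuerbachBasis v g :=
  stmt15_general X x f hX
end

section
/- For every countable compact metric space K, the Banach space C(K) of continuous real-valued functions on K with the sup norm admits an Auerbach basis. -/
/-!
A countable compact metric space `K` is totally separated, so countably many clopen sets separate
its points and `K` embeds into the Cantor space `ℕ → Bool`. Pulling back the cylinders gives a
binary tree of clopen pieces of `K`. Put mass `1` on the root and pass it down the tree, halving it
at every node where both children meet `K`; integration over a cylinder against this measure is a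
limit of Riemann sums. The Haar system — the constant `1` and, at every splitting node, the function
that is `1` on one child and `-1` on the other — together with the integral and the normalised
differences of the integrals over the two children, is a biorthogonal system of norm-one elements:
biorthogonality holds because the two children of a splitting node carry equal mass. The cylinder
indicators lie in the span of the Haar system and are dense by Stone–Weierstrass, and the
functionals are total because every nonempty cylinder has positive mass.
-/

open Filter Topology

lemma ContinuousLinearMap.norm_eq_one_of_apply_eq_one {E : Type*} [NormedAddCommGroup E]
    [NormedSpace ℝ E] {f : E →L[ℝ] ℝ} (hf : ‖f‖ ≤ 1) {x : E} (hx : ‖x‖ = 1) (hfx : f x = 1) :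
    ‖f‖ = 1 :=
  le_antisymm hf (by simpa [hx, hfx] using f.le_opNorm x)

namespace CantorTree

variable {K : Type*} (φ : K → ℕ → Bool)

/-- The node `t` lists the first `t.length` coordinates in reverse order, as `PiNat.res` does,
so that the children of `t` are `true :: t` and `false :: t`. -/
def cyl (t : List Bool) : Set K := {x | PiNat.res (φ x) t.length = t}

variable {φ}

lemma mem_cyl {t : List Bool} {x : K} : x ∈ cyl φ t ↔ PiNat.res (φ x) t.length = t := Iff.rfl

@[simp] lemma cyl_nil : cyl φ [] = Set.univ := by
  ext x; simp [mem_cyl]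

lemma mem_cyl_cons {b : Bool} {t : List Bool} {x : K} :
    x ∈ cyl φ (b :: t) ↔ x ∈ cyl φ t ∧ φ x t.length = b := by
  simp only [mem_cyl, List.length_cons, PiNat.res_succ, List.cons.injEq]
  tauto

lemma mem_cyl_res (x : K) (n : ℕ) : x ∈ cyl φ (PiNat.res (φ x) n) := by
  simp [mem_cyl, PiNat.res_length]

lemma res_suffix_res (y : ℕ → Bool) {m n : ℕ} (h : m ≤ n) :
    PiNat.res y m <:+ PiNat.res y n := by
  induction n, h using Nat.le_induction with
  | base => exact List.suffix_refl _
  | succ n _ ih => exact ih.trans (by rw [PiNat.res_succ]; exact List.suffix_cons _ _)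

lemma cyl_subset_of_suffix {s t : List Bool} (h : s <:+ t) : cyl φ t ⊆ cyl φ s := by
  intro x hx
  have hres : PiNat.res (φ x) s.length <:+ t := by
    rw [← mem_cyl.1 hx]; exact res_suffix_res _ h.length_le
  exact (List.suffix_of_suffix_length_le hres h (by simp [PiNat.res_length])).eq_of_length
    (by simp [PiNat.res_length])

lemma cyl_cons_subset (b : Bool) (t : List Bool) : cyl φ (b :: t) ⊆ cyl φ t :=
  cyl_subset_of_suffix (List.suffix_cons _ _)

lemma suffix_or_suffix_or_disjoint (s t : List Bool) :
    s <:+ t ∨ t <:+ s ∨ Disjoint (cyl φ s) (cyl φ t) := by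
  by_contra! h
  obtain ⟨x, hs, ht⟩ := Set.not_disjoint_iff.1 h.2.2
  rw [mem_cyl] at hs ht
  rcases le_total s.length t.length with hle | hle
  · exact h.1 (hs ▸ ht ▸ res_suffix_res _ hle)
  · exact h.2.1 (hs ▸ ht ▸ res_suffix_res _ hle)

lemma disjoint_cyl_cons_not (b : Bool) (t : List Bool) :
    Disjoint (cyl φ (b :: t)) (cyl φ ((!b) :: t)) := by
  refine Set.disjoint_left.2 fun x h h' => ?_
  have := (mem_cyl_cons.1 h).2.symm.trans (mem_cyl_cons.1 h').2
  cases b <;> simp at this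

lemma exists_cons_suffix {s t : List Bool} (h : s <:+ t) (hne : s ≠ t) :
    ∃ b, b :: s <:+ t := by
  induction t with
  | nil => exact absurd (List.suffix_nil.1 h) hne
  | cons a t ih =>
    rcases List.suffix_cons_iff.1 h with h | h
    · exact absurd h hne
    · by_cases hst : s = t
      · exact ⟨a, hst ▸ List.suffix_refl _⟩
      · obtain ⟨b, hb⟩ := ih h hst
        exact ⟨b, hb.trans (List.suffix_cons _ _)⟩

lemma isClopen_cyl [TopologicalSpace K] (hφ : Continuous φ) (t : List Bool) :
    IsClopen (cyl φ t) := by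
  induction t with
  | nil => simpa using isClopen_univ
  | cons b t ih =>
    have : cyl φ (b :: t) = cyl φ t ∩ (fun x => φ x t.length) ⁻¹' {b} := by
      ext x; simp [mem_cyl_cons]
    rw [this]
    exact ih.inter ((isClopen_discrete _).preimage ((continuous_apply _).comp hφ))

lemma cyl_eq_union (b : Bool) (t : List Bool) :
    cyl φ t = cyl φ (b :: t) ∪ cyl φ ((!b) :: t) := by
  ext x
  simp only [Set.mem_union, mem_cyl_cons]
  cases b <;> cases φ x t.length <;> simp

variable (φ)

open Classical in
/-- The mass of `cyl φ t`: mass is halved at nodes where both children meet `K`. -/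
noncomputable def weight : List Bool → ℝ
  | [] => 1
  | b :: t => if (cyl φ (b :: t)).Nonempty then
      (if (cyl φ ((!b) :: t)).Nonempty then weight t / 2 else weight t) else 0

def Split (t : List Bool) : Prop := ∀ b : Bool, (cyl φ (b :: t)).Nonempty

variable {φ}

lemma weight_nonneg (t : List Bool) : 0 ≤ weight φ t := by
  induction t with
  | nil => simp [weight]
  | cons b t ih => simp only [weight]; split_ifs <;> linarith

lemma weight_le_one (t : List Bool) : weight φ t ≤ 1 := by
  induction t with
  | nil => simp [weight]
  | cons b t ih => simp only [weight]; split_ifs <;> linarith [weight_nonneg (φ := φ) t]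

lemma weight_pos {t : List Bool} (h : (cyl φ t).Nonempty) : 0 < weight φ t := by
  induction t with
  | nil => simp [weight]
  | cons b t ih =>
    have ht : (cyl φ t).Nonempty := h.mono (cyl_cons_subset _ _)
    simp only [weight, if_pos h]
    split_ifs <;> linarith [ih ht]

lemma weight_eq_zero [Nonempty K] {t : List Bool} (h : ¬ (cyl φ t).Nonempty) :
    weight φ t = 0 := by
  cases t with
  | nil => simp at h
  | cons b t => simp only [weight, if_neg h]

lemma weight_cons_add_weight_cons_not [Nonempty K] (b : Bool) (t : List Bool) :
    weight φ (b :: t) + weight φ ((!b) :: t) = weight φ t := by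
  have hempty (h : ¬ (cyl φ (b :: t)).Nonempty) (h' : ¬ (cyl φ ((!b) :: t)).Nonempty) :
      weight φ t = 0 :=
    weight_eq_zero (by rw [cyl_eq_union b t, Set.union_nonempty]; tauto)
  by_cases h : (cyl φ (b :: t)).Nonempty <;> by_cases h' : (cyl φ ((!b) :: t)).Nonempty <;>
    simp [weight, h, h', hempty]

lemma weight_cons_of_split {t : List Bool} (h : Split φ t) (b : Bool) :
    weight φ (b :: t) = weight φ t / 2 := by
  simp only [weight, if_pos (h b), if_pos (h (!b))]

lemma weight_pos_of_split {t : List Bool} (h : Split φ t) : 0 < weight φ t :=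
  weight_pos ((h true).mono (cyl_cons_subset _ _))

variable (φ)

noncomputable def samplePoint [Nonempty K] (t : List Bool) : K :=
  Classical.epsilon (· ∈ cyl φ t)

variable {φ}

lemma samplePoint_mem [Nonempty K] {t : List Bool} (h : (cyl φ t).Nonempty) :
    samplePoint φ t ∈ cyl φ t :=
  Classical.epsilon_spec h

section RiemannSum

variable [TopologicalSpace K] [Nonempty K]

variable (φ)

noncomputable def riemannSum : ℕ → List Bool → C(K, ℝ) →L[ℝ] ℝ
  | 0, t => weight φ t • ContinuousMap.evalCLM ℝ (samplePoint φ t)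
  | n + 1, t => riemannSum n (true :: t) + riemannSum n (false :: t)

variable {φ}

lemma riemannSum_succ (n : ℕ) (b : Bool) (t : List Bool) (y : C(K, ℝ)) :
    riemannSum φ (n + 1) t y = riemannSum φ n (b :: t) y + riemannSum φ n ((!b) :: t) y := by
  cases b <;> simp [riemannSum, add_comm]

lemma abs_riemannSum_sub_le {y : C(K, ℝ)} {c ε : ℝ} (n : ℕ) {t : List Bool}
    (h : ∀ x ∈ cyl φ t, |y x - c| ≤ ε) :
    |riemannSum φ n t y - weight φ t * c| ≤ weight φ t * ε := by
  induction n generalizing t with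
  | zero =>
    by_cases ht : (cyl φ t).Nonempty
    · simp only [riemannSum, FunLike.coe_smul, Pi.smul_apply, ContinuousMap.evalCLM_apply,
        smul_eq_mul, ← mul_sub, abs_mul, abs_of_nonneg (weight_nonneg t)]
      exact mul_le_mul_of_nonneg_left (h _ (samplePoint_mem ht)) (weight_nonneg t)
    · simp [riemannSum, weight_eq_zero ht]
  | succ n ih =>
    have hchild (b : Bool) := ih (t := b :: t) fun x hx => h x (cyl_cons_subset _ _ hx)
    rw [riemannSum_succ n true, ← weight_cons_add_weight_cons_not true]
    calc _ = |(riemannSum φ n (true :: t) y - weight φ (true :: t) * c)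
          + (riemannSum φ n ((!true) :: t) y - weight φ ((!true) :: t) * c)| := by ring_nf
      _ ≤ _ := (abs_add_le _ _).trans (add_le_add (hchild _) (hchild _))
      _ = _ := by ring

lemma abs_riemannSum_add_sub_le {y : C(K, ℝ)} {ε : ℝ} (m n : ℕ) {t : List Bool}
    (h : ∀ s : List Bool, t.length + m ≤ s.length →
      ∀ x ∈ cyl φ s, ∀ x' ∈ cyl φ s, |y x - y x'| ≤ ε) :
    |riemannSum φ (m + n) t y - riemannSum φ m t y| ≤ weight φ t * ε := by
  induction m generalizing t with
  | zero =>
    simpa [riemannSum] using abs_riemannSum_sub_le n (c := y (samplePoint φ t)) fun x hx =>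
      h t (by simp) x hx _ (samplePoint_mem ⟨x, hx⟩)
  | succ m ih =>
    have hchild (b : Bool) := ih (t := b :: t) fun s hs => h s (by simp at hs; omega)
    rw [show m + 1 + n = m + n + 1 by omega, riemannSum_succ _ true, riemannSum_succ _ true,
      ← weight_cons_add_weight_cons_not true]
    calc _ = |(riemannSum φ (m + n) (true :: t) y - riemannSum φ m (true :: t) y)
          + (riemannSum φ (m + n) ((!true) :: t) y - riemannSum φ m ((!true) :: t) y)| := by
          ring_nf
      _ ≤ _ := (abs_add_le _ _).trans (add_le_add (hchild _) (hchild _))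
      _ = _ := by ring

end RiemannSum

lemma exists_abs_sub_le_of_mem_cyl [TopologicalSpace K] [CompactSpace K] (hφ : Continuous φ) (hφi : Function.Injective φ)
    (y : C(K, ℝ)) {ε : ℝ} (hε : 0 < ε) :
    ∃ L, ∀ t : List Bool, L ≤ t.length → ∀ x ∈ cyl φ t, ∀ x' ∈ cyl φ t, |y x - y x'| ≤ ε := by
  -- the compact sets `V L` decrease to the diagonal, so one of them lies in `|y p.1 - y p.2| < ε`
  let V (L : ℕ) : Set (K × K) := {p | ∀ i < L, φ p.1 i = φ p.2 i}
  have hV_closed (L : ℕ) : IsClosed (V L) := by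
    simp only [V, Set.ofPred_forall]
    exact isClosed_biInter fun i _ => isClosed_eq
      ((continuous_apply i).comp (hφ.comp continuous_fst))
      ((continuous_apply i).comp (hφ.comp continuous_snd))
  have hV_anti : Antitone V := fun L L' hL p hp i hi => hp i (hi.trans_le hL)
  obtain ⟨L, hL⟩ := exists_subset_nhds_of_isCompact' hV_anti.directed_ge
    (fun L => (hV_closed L).isCompact) hV_closed
    (U := {p | |y p.1 - y p.2| < ε}) fun p hp => by
      have : p.1 = p.2 :=
        hφi (funext fun i => Set.mem_iInter.1 hp (i + 1) i (Nat.lt_succ_self i))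
      refine (isOpen_lt (by fun_prop) continuous_const).mem_nhds ?_
      simp [this, hε]
  refine ⟨L, fun t ht x hx x' hx' => le_of_lt (hL (a := (x, x')) fun i hi => ?_)⟩
  exact PiNat.res_eq_res.1 ((mem_cyl.1 hx).trans (mem_cyl.1 hx').symm) (hi.trans_le ht)

section CylIntegral

variable [TopologicalSpace K] [CompactSpace K] [Nonempty K] (hφ : IsEmbedding φ)

include hφ in
lemma cauchySeq_riemannSum (t : List Bool) (y : C(K, ℝ)) :
    CauchySeq fun n => riemannSum φ n t y := by
  refine Metric.cauchySeq_iff'.2 fun ε hε => ?_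
  obtain ⟨L, hL⟩ := exists_abs_sub_le_of_mem_cyl hφ.continuous hφ.injective y (half_pos hε)
  refine ⟨t.length + L, fun n hn => ?_⟩
  obtain ⟨k, rfl⟩ := Nat.exists_eq_add_of_le hn
  refine (abs_riemannSum_add_sub_le _ k fun s hs => hL s (by omega)).trans_lt ?_
  nlinarith [weight_le_one (φ := φ) t, weight_nonneg (φ := φ) t]

/-- Integration over `cyl φ t` against the measure that gives `cyl φ s` the mass `weight φ s`. -/
noncomputable def cylIntegral (t : List Bool) : C(K, ℝ) →L[ℝ] ℝ :=
  continuousLinearMapOfTendsto (fun n => riemannSum φ n t)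
    (tendsto_pi_nhds.2 fun y => (cauchySeq_riemannSum hφ t y).tendsto_limUnder)

lemma tendsto_riemannSum (t : List Bool) (y : C(K, ℝ)) :
    Tendsto (fun n => riemannSum φ n t y) atTop (𝓝 (cylIntegral hφ t y)) :=
  (cauchySeq_riemannSum hφ t y).tendsto_limUnder

variable {hφ}

lemma abs_cylIntegral_sub_le {y : C(K, ℝ)} {c ε : ℝ} {t : List Bool}
    (h : ∀ x ∈ cyl φ t, |y x - c| ≤ ε) :
    |cylIntegral hφ t y - weight φ t * c| ≤ weight φ t * ε :=
  le_of_tendsto ((tendsto_riemannSum hφ t y).sub_const _).abs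
    (Eventually.of_forall fun n => abs_riemannSum_sub_le n h)

lemma cylIntegral_of_eqOn {y : C(K, ℝ)} {c : ℝ} {t : List Bool} (h : ∀ x ∈ cyl φ t, y x = c) :
    cylIntegral hφ t y = weight φ t * c := by
  have := abs_cylIntegral_sub_le (hφ := hφ) (y := y) (c := c) (ε := 0) (t := t) fun x hx => by
    simp [h x hx]
  rwa [mul_zero, abs_nonpos_iff, sub_eq_zero] at this

lemma norm_cylIntegral_le (t : List Bool) : ‖cylIntegral hφ t‖ ≤ weight φ t :=
  ContinuousLinearMap.opNorm_le_bound _ (weight_nonneg t) fun y => by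
    simpa using abs_cylIntegral_sub_le (hφ := hφ) (c := 0) fun x _ => by
      simpa using y.norm_coe_le_norm x

lemma cylIntegral_cons_add (b : Bool) (t : List Bool) (y : C(K, ℝ)) :
    cylIntegral hφ (b :: t) y + cylIntegral hφ ((!b) :: t) y = cylIntegral hφ t y := by
  refine tendsto_nhds_unique ((tendsto_riemannSum hφ _ y).add (tendsto_riemannSum hφ _ y)) ?_
  simpa only [riemannSum_succ _ b] using
    (tendsto_add_atTop_iff_nat 1).2 (tendsto_riemannSum hφ t y)

lemma cylIntegral_eq_of_suffix {s t : List Bool} (hst : s <:+ t) {y : C(K, ℝ)}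
    (hy : ∀ x ∉ cyl φ t, y x = 0) : cylIntegral hφ s y = cylIntegral hφ t y := by
  induction t with
  | nil => rw [List.suffix_nil.1 hst]
  | cons b t ih =>
    rcases List.suffix_cons_iff.1 hst with rfl | hst
    · rfl
    have hout : cylIntegral hφ ((!b) :: t) y = 0 := by
      simpa using cylIntegral_of_eqOn (hφ := hφ) (c := 0) fun x hx =>
        hy x (Set.disjoint_right.1 (disjoint_cyl_cons_not b t) hx)
    rw [ih hst fun x hx => hy x fun hx' => hx (cyl_cons_subset _ _ hx'),
      ← cylIntegral_cons_add b, hout, add_zero]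

end CylIntegral

section Indicator

variable [TopologicalSpace K]

variable (hφ : Continuous φ)

noncomputable def cylIndicator (t : List Bool) : C(K, ℝ) :=
  (LocallyConstant.charFn ℝ (isClopen_cyl hφ t)).toContinuousMap

noncomputable def haarVector (t : List Bool) : C(K, ℝ) :=
  cylIndicator hφ (true :: t) - cylIndicator hφ (false :: t)

variable (φ) in
abbrev HaarIndex : Type _ := Option {t : List Bool // Split φ t}

noncomputable def haarBasisVector : HaarIndex φ → C(K, ℝ)
  | none => 1
  | some t => haarVector hφ t.1

variable {hφ}

lemma cylIndicator_apply (t : List Bool) (x : K) :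
    cylIndicator hφ t x = (cyl φ t).indicator 1 x := rfl

lemma cylIndicator_nil : cylIndicator hφ [] = 1 := by
  ext x; simp [cylIndicator_apply]

lemma cylIndicator_eq_zero {t : List Bool} (h : ¬ (cyl φ t).Nonempty) :
    cylIndicator hφ t = 0 := by
  ext x
  simp [cylIndicator_apply, Set.not_nonempty_iff_eq_empty.1 h]

lemma cylIndicator_cons_add (b : Bool) (t : List Bool) :
    cylIndicator hφ (b :: t) + cylIndicator hφ ((!b) :: t) = cylIndicator hφ t := by
  ext x
  simp only [ContinuousMap.add_apply, cylIndicator_apply, cyl_eq_union b t]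
  exact (congrFun (Set.indicator_union_of_disjoint (disjoint_cyl_cons_not b t) _) x).symm

lemma cylIndicator_mul_mem (s t : List Bool) :
    cylIndicator hφ s * cylIndicator hφ t ∈
      ({cylIndicator hφ s, cylIndicator hφ t, 0} : Set C(K, ℝ)) := by
  have hmul (x : K) :
      (cylIndicator hφ s * cylIndicator hφ t) x = (cyl φ s ∩ cyl φ t).indicator 1 x := by
    simp [cylIndicator_apply, Set.inter_indicator_one]
  rcases suffix_or_suffix_or_disjoint (φ := φ) s t with h | h | h
  · right; left
    ext x
    rw [hmul, Set.inter_eq_right.2 (cyl_subset_of_suffix h), cylIndicator_apply]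
  · left
    ext x
    rw [hmul, Set.inter_eq_left.2 (cyl_subset_of_suffix h), cylIndicator_apply]
  · right; right
    ext x
    simp [hmul, h.inter_eq]

lemma haarVector_of_mem_cons {b : Bool} {t : List Bool} {x : K} (hx : x ∈ cyl φ (b :: t)) :
    haarVector hφ t x = if b then 1 else -1 := by
  have hx' := Set.disjoint_left.1 (disjoint_cyl_cons_not b t) hx
  cases b <;> simp_all [haarVector, cylIndicator_apply]

lemma haarVector_of_notMem {t : List Bool} {x : K} (hx : x ∉ cyl φ t) : haarVector hφ t x = 0 := by
  have (b : Bool) : x ∉ cyl φ (b :: t) := fun h => hx (cyl_cons_subset b t h)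
  simp [haarVector, cylIndicator_apply, this]

lemma cylIndicator_mem_span_haarBasisVector (t : List Bool) :
    cylIndicator hφ t ∈ Submodule.span ℝ (Set.range (haarBasisVector hφ)) := by
  induction t with
  | nil => exact cylIndicator_nil (hφ := hφ) ▸ Submodule.subset_span ⟨none, rfl⟩
  | cons b t ih =>
    have hsum := cylIndicator_cons_add (hφ := hφ) b t
    by_cases h : (cyl φ (b :: t)).Nonempty
    swap
    · rw [cylIndicator_eq_zero h]; exact Submodule.zero_mem _
    by_cases h' : (cyl φ ((!b) :: t)).Nonempty
    swap
    · rw [cylIndicator_eq_zero h', add_zero] at hsum; rwa [hsum]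
    have hsplit : Split φ t := fun b' => by
      rcases Bool.eq_or_eq_not b' b with rfl | rfl <;> assumption
    have hdiff : cylIndicator hφ (b :: t) - cylIndicator hφ ((!b) :: t)
        ∈ Submodule.span ℝ (Set.range (haarBasisVector hφ)) := by
      have hv : haarVector hφ t ∈ Submodule.span ℝ (Set.range (haarBasisVector hφ)) :=
        Submodule.subset_span ⟨some ⟨t, hsplit⟩, rfl⟩
      cases b
      · simpa [haarBasisVector, haarVector] using Submodule.neg_mem _ hv
      · simpa [haarBasisVector, haarVector] using hv
    have : cylIndicator hφ (b :: t) = (2⁻¹ : ℝ) •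
        (cylIndicator hφ t + (cylIndicator hφ (b :: t) - cylIndicator hφ ((!b) :: t))) := by
      rw [← hsum]; module
    rw [this]
    exact Submodule.smul_mem _ _ (Submodule.add_mem _ ih hdiff)

lemma norm_haarVector [CompactSpace K] {t : List Bool} (ht : Split φ t) :
    ‖haarVector hφ t‖ = 1 := by
  refine le_antisymm ((ContinuousMap.norm_le _ zero_le_one).2 fun x => ?_) ?_
  · by_cases hx : x ∈ cyl φ t
    · rw [cyl_eq_union true t] at hx
      rcases hx with hx | hx <;> simp [haarVector_of_mem_cons hx]
    · simp [haarVector_of_notMem hx]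
  · obtain ⟨x, hx⟩ := ht true
    simpa [haarVector_of_mem_cons hx] using (haarVector hφ t).norm_coe_le_norm x

lemma topologicalClosure_span_cylIndicator [CompactSpace K] (hφi : Function.Injective φ) :
    (Submodule.span ℝ (Set.range (cylIndicator hφ))).topologicalClosure = ⊤ := by
  set D := Submodule.span ℝ (Set.range (cylIndicator hφ))
  have hmul (f g : C(K, ℝ)) (hf : f ∈ D) (hg : g ∈ D) : f * g ∈ D := by
    have hfg := Submodule.mul_mem_mul hf hg
    rw [Submodule.span_mul_span] at hfg
    refine Submodule.span_le.2 ?_ hfg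
    rintro _ ⟨_, ⟨s, rfl⟩, _, ⟨t, rfl⟩, rfl⟩
    change cylIndicator hφ s * cylIndicator hφ t ∈ D
    rcases cylIndicator_mul_mem (hφ := hφ) s t with h | h | h
    · rw [h]; exact Submodule.subset_span ⟨s, rfl⟩
    · rw [h]; exact Submodule.subset_span ⟨t, rfl⟩
    · rw [Set.mem_singleton_iff.1 h]; exact D.zero_mem
  let A := D.toSubalgebra (cylIndicator_nil (hφ := hφ) ▸ Submodule.subset_span ⟨[], rfl⟩) hmul
  have hsep : A.SeparatesPoints := by
    intro x x' hxx'
    obtain ⟨n, hn⟩ : ∃ n, PiNat.res (φ x) n ≠ PiNat.res (φ x') n := by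
      by_contra! h
      exact hxx' (hφi (PiNat.res_injective (funext h)))
    have hx' : x' ∉ cyl φ (PiNat.res (φ x) n) := fun hx' =>
      hn (by rw [mem_cyl, PiNat.res_length] at hx'; exact hx'.symm)
    refine ⟨_, ⟨cylIndicator hφ (PiNat.res (φ x) n), Submodule.subset_span ⟨_, rfl⟩, rfl⟩, ?_⟩
    simp [cylIndicator_apply, mem_cyl_res, hx']
  have hA := ContinuousMap.subalgebra_topologicalClosure_eq_top_of_separatesPoints A hsep
  rw [← SetLike.coe_set_eq, Subalgebra.topologicalClosure_coe, Algebra.coe_top] at hA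
  rw [← SetLike.coe_set_eq, Submodule.topologicalClosure_coe, Submodule.top_coe]
  exact hA

end Indicator

section Haar

variable [TopologicalSpace K] [CompactSpace K] [Nonempty K] (hφ : IsEmbedding φ)

noncomputable def haarFunctional (t : List Bool) : C(K, ℝ) →L[ℝ] ℝ :=
  (weight φ t)⁻¹ • (cylIntegral hφ (true :: t) - cylIntegral hφ (false :: t))

variable {hφ}

lemma haarFunctional_apply (t : List Bool) (y : C(K, ℝ)) :
    haarFunctional hφ t y =
      (weight φ t)⁻¹ * (cylIntegral hφ (true :: t) y - cylIntegral hφ (false :: t) y) :=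
  rfl

lemma haarFunctional_of_eqOn {t : List Bool} (ht : Split φ t) {y : C(K, ℝ)} {c : ℝ}
    (h : ∀ x ∈ cyl φ t, y x = c) : haarFunctional hφ t y = 0 := by
  have hchild (b : Bool) : cylIntegral hφ (b :: t) y = weight φ t / 2 * c := by
    rw [cylIntegral_of_eqOn fun x hx => h x (cyl_cons_subset _ _ hx),
      weight_cons_of_split ht]
  simp [haarFunctional_apply, hchild]

lemma haarFunctional_haarVector_self {t : List Bool} (ht : Split φ t) :
    haarFunctional hφ t (haarVector hφ.continuous t) = 1 := by
  have hw := weight_pos_of_split ht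
  rw [haarFunctional_apply, cylIntegral_of_eqOn fun x => haarVector_of_mem_cons,
    cylIntegral_of_eqOn fun x => haarVector_of_mem_cons, weight_cons_of_split ht,
    weight_cons_of_split ht]
  field_simp
  norm_num

lemma cylIntegral_haarVector_of_suffix {s u : List Bool} (hu : Split φ u) (hsu : s <:+ u) :
    cylIntegral hφ s (haarVector hφ.continuous u) = 0 := by
  rw [cylIntegral_eq_of_suffix hsu fun x => haarVector_of_notMem, ← cylIntegral_cons_add true,
    cylIntegral_of_eqOn fun x => haarVector_of_mem_cons,
    cylIntegral_of_eqOn fun x => haarVector_of_mem_cons, weight_cons_of_split hu,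
    weight_cons_of_split hu]
  norm_num

lemma haarFunctional_haarVector_of_ne {t u : List Bool} (ht : Split φ t) (hu : Split φ u)
    (hne : t ≠ u) : haarFunctional hφ t (haarVector hφ.continuous u) = 0 := by
  rcases suffix_or_suffix_or_disjoint (φ := φ) t u with h | h | h
  · obtain ⟨b, hb⟩ := exists_cons_suffix h hne
    have hchild (b' : Bool) : cylIntegral hφ (b' :: t) (haarVector hφ.continuous u) = 0 := by
      rcases Bool.eq_or_eq_not b' b with rfl | rfl
      · exact cylIntegral_haarVector_of_suffix hu hb
      · simpa using cylIntegral_of_eqOn (hφ := hφ) (c := 0) fun x hx => haarVector_of_notMem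
          fun hx' => Set.disjoint_right.1 (disjoint_cyl_cons_not b t) hx
            (cyl_subset_of_suffix hb hx')
    simp [haarFunctional_apply, hchild]
  · obtain ⟨b, hb⟩ := exists_cons_suffix h (Ne.symm hne)
    exact haarFunctional_of_eqOn ht fun x hx => haarVector_of_mem_cons (cyl_subset_of_suffix hb hx)
  · exact haarFunctional_of_eqOn ht fun x hx => haarVector_of_notMem (Set.disjoint_left.1 h hx)

lemma norm_haarFunctional {t : List Bool} (ht : Split φ t) : ‖haarFunctional hφ t‖ = 1 := by
  have hw := weight_pos_of_split ht
  refine le_antisymm ?_ ?_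
  · calc ‖haarFunctional hφ t‖
        ≤ ‖(weight φ t)⁻¹‖ * ‖cylIntegral hφ (true :: t) - cylIntegral hφ (false :: t)‖ :=
          ContinuousLinearMap.opNorm_smul_le _
            (cylIntegral hφ (true :: t) - cylIntegral hφ (false :: t))
      _ ≤ (weight φ t)⁻¹ * (weight φ (true :: t) + weight φ ((!true) :: t)) := by
          rw [norm_inv, Real.norm_of_nonneg hw.le]
          gcongr
          exact (norm_sub_le (cylIntegral hφ (true :: t)) (cylIntegral hφ (false :: t))).trans
            (add_le_add (norm_cylIntegral_le _) (norm_cylIntegral_le _))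
      _ = 1 := by rw [weight_cons_add_weight_cons_not, inv_mul_cancel₀ hw.ne']
  · simpa [haarFunctional_haarVector_self ht, norm_haarVector ht] using
      (haarFunctional hφ t).le_opNorm (haarVector hφ.continuous t)

lemma cylIntegral_nil_one : cylIntegral hφ [] 1 = 1 := by
  simpa [weight] using cylIntegral_of_eqOn (hφ := hφ) (y := 1) (t := []) (c := 1) fun _ _ => rfl

lemma norm_cylIntegral_nil : ‖cylIntegral hφ []‖ = 1 :=
  ContinuousLinearMap.norm_eq_one_of_apply_eq_one (by simpa [weight] using norm_cylIntegral_le [])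
    norm_one cylIntegral_nil_one

variable (hφ) in
noncomputable def haarBasisFunctional : HaarIndex φ → C(K, ℝ) →L[ℝ] ℝ
  | none => cylIntegral hφ []
  | some t => haarFunctional hφ t.1

lemma cylIntegral_eq_zero_of_haarBasisFunctional {y : C(K, ℝ)}
    (h : ∀ i, haarBasisFunctional hφ i y = 0) (t : List Bool) : cylIntegral hφ t y = 0 := by
  induction t with
  | nil => exact h none
  | cons b t ih =>
    by_cases hs : Split φ t
    · have hw := weight_pos_of_split hs
      have heq : cylIntegral hφ (true :: t) y = cylIntegral hφ (false :: t) y := by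
        have := h (some ⟨t, hs⟩)
        rwa [haarBasisFunctional, haarFunctional_apply, mul_eq_zero,
          or_iff_right (inv_ne_zero hw.ne'), sub_eq_zero] at this
      have hsum := cylIntegral_cons_add (hφ := hφ) true t y
      rw [ih, Bool.not_true] at hsum
      cases b <;> linarith
    · obtain ⟨b', hb'⟩ := not_forall.1 hs
      have h0 : cylIntegral hφ (b' :: t) y = 0 := by
        simpa using cylIntegral_of_eqOn (hφ := hφ) (c := 0) fun x hx => (hb' ⟨x, hx⟩).elim
      have hsum := cylIntegral_cons_add (hφ := hφ) b' t y
      rw [ih, h0, zero_add] at hsum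
      rcases Bool.eq_or_eq_not b b' with rfl | rfl
      exacts [h0, hsum]

lemma eq_zero_of_forall_cylIntegral_eq_zero {y : C(K, ℝ)} (h : ∀ t, cylIntegral hφ t y = 0) :
    y = 0 := by
  ext x
  refine eq_of_forall_dist_le fun ε hε => ?_
  obtain ⟨L, hL⟩ := exists_abs_sub_le_of_mem_cyl hφ.continuous hφ.injective y hε
  have hx : x ∈ cyl φ (PiNat.res (φ x) L) := mem_cyl_res x L
  have hw := weight_pos ⟨x, hx⟩
  have := abs_cylIntegral_sub_le (hφ := hφ) (c := y x) fun x' hx' =>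
    hL _ (PiNat.res_length _ _).ge x' hx' x hx
  rw [h, zero_sub, abs_neg, abs_mul, abs_of_pos hw] at this
  simpa [Real.dist_eq] using le_of_mul_le_mul_left this hw

variable (hφ) in
theorem isAuerbachBasis_haarBasis :
    IsAuerbachBasis (haarBasisVector hφ.continuous) (haarBasisFunctional hφ) where
  biorth_eq
    | none => cylIntegral_nil_one (hφ := hφ)
    | some ⟨_, ht⟩ => haarFunctional_haarVector_self ht
  biorth_ne
    | none, none, h => absurd rfl h
    | none, some ⟨_, hu⟩, _ => cylIntegral_haarVector_of_suffix (hφ := hφ) hu List.nil_suffix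
    | some ⟨_, ht⟩, none, _ => haarFunctional_of_eqOn ht (c := 1) fun _ _ => rfl
    | some ⟨_, ht⟩, some ⟨_, hu⟩, h =>
      haarFunctional_haarVector_of_ne ht hu fun htu => h (by subst htu; rfl)
  norm_vec
    | none => norm_one
    | some ⟨_, ht⟩ => norm_haarVector ht
  norm_fun
    | none => norm_cylIntegral_nil (hφ := hφ)
    | some ⟨_, ht⟩ => norm_haarFunctional ht
  fundamental := eq_top_iff.2 <| (topologicalClosure_span_cylIndicator hφ.injective).ge.trans <|
    Submodule.topologicalClosure_mono <| Submodule.span_le.2 <|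
      Set.range_subset_iff.2 cylIndicator_mem_span_haarBasisVector
  total _ hy :=
    eq_zero_of_forall_cylIntegral_eq_zero (cylIntegral_eq_zero_of_haarBasisFunctional hy)

end Haar

end CantorTree

lemma exists_isEmbedding_nat_bool (K : Type*) [TopologicalSpace K] [CompactSpace K]
    [TotallySeparatedSpace K] [Countable K] [Nonempty K] : ∃ φ : K → ℕ → Bool, IsEmbedding φ := by
  have hsep (p : K × K) : ∃ U : Set K, IsClopen U ∧ (p.1 ≠ p.2 → p.1 ∈ U ∧ p.2 ∉ U) := by
    by_cases hp : p.1 = p.2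
    · exact ⟨∅, isClopen_empty, fun h => (h hp).elim⟩
    · obtain ⟨U, hU, h1, h2⟩ := exists_isClopen_of_totally_separated hp
      exact ⟨U, hU, fun _ => ⟨h1, h2⟩⟩
  choose U hU hUsep using hsep
  obtain ⟨e, he⟩ := exists_surjective_nat (K × K)
  refine ⟨fun x n => (U (e n)).boolIndicator x, (Continuous.isClosedEmbedding ?_ ?_).isEmbedding⟩
  · exact continuous_pi fun n => (continuous_boolIndicator_iff_isClopen _).2 (hU _)
  · intro a b hab
    by_contra hne
    obtain ⟨n, hn⟩ := he (a, b)
    have h : (U (e n)).boolIndicator a = (U (e n)).boolIndicator b := congrFun hab n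
    obtain ⟨ha, hb⟩ := hUsep (a, b) hne
    rw [hn, (Set.mem_iff_boolIndicator _ _).1 ha, (Set.notMem_iff_boolIndicator _ _).1 hb] at h
    exact Bool.noConfusion h

lemma IsAuerbachBasis.of_subsingleton {X : Type*} [NormedAddCommGroup X] [NormedSpace ℝ X]
    [Subsingleton X] : IsAuerbachBasis (Empty.elim : Empty → X) Empty.elim where
  biorth_eq := nofun
  biorth_ne := nofun
  norm_vec := nofun
  norm_fun := nofun
  fundamental := Subsingleton.elim _ _
  total _ _ := Subsingleton.elim _ _

/-- For every countable compact metric space `K`, the Banach space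
`C(K)` of continuous real-valued functions with the sup norm admits an Auerbach basis. -/
theorem stmt17 (K : Type) [MetricSpace K] [CompactSpace K] [Countable K] :
    ∃ (ι : Type) (x : ι → C(K, ℝ)) (f : ι → C(K, ℝ) →L[ℝ] ℝ), IsAuerbachBasis x f := by
  cases isEmpty_or_nonempty K
  · exact ⟨Empty, _, _, IsAuerbachBasis.of_subsingleton⟩
  · obtain ⟨φ, hφ⟩ := exists_isEmbedding_nat_bool K
    exact ⟨_, _, _, CantorTree.isAuerbachBasis_haarBasis hφ⟩
end
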